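/- Let A be a unital C*-algebra, F a finite-dimensional C*-algebra, ψ : A → F a completely positive contractive map, and q ∈ F a projection with ‖ψ(1_A) − q‖ < δ < 1/4. Then the element qψ(1_A)q is invertible in qFq, and the map ψ' : A → qFq defined by ψ'(a) := (qψ(1_A)q)^{−1/2} · qψ(a)q · (qψ(1_A)q)^{−1/2} is unital completely positive and satisfies ‖ψ'(a) − ψ(a)‖ ≤ C(δ)·‖a‖ for all a ∈ A, where C(δ) → 0 as δ → 0. -/

import Mathlib

/-!
Put `b = q ψ(1) q`. The element `b + (1 - q)` commutes with `q` and lies within `‖b - q‖ < δ` of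
`1`, so the spectrum of `b` lies in `{0} ∪ [1 - ‖b - q‖, 1 + ‖b - q‖]`. This gap at `0` makes
`t ↦ t⁻¹` and `t ↦ t ^ (-1/2)` continuous on the spectrum, and forces the support projection `e`
of `b` to be `q`, since `p = q - e` is a projection with `p (q - b) p = p` and `‖q - b‖ < 1`. The
functional calculus then gives the inverse of `b` in `qFq` and `r = b ^ (-1/2)` with `r b r = q`
and `‖r - q‖ ≤ 2δ`; conjugation by `r` preserves complete positivity. For the estimate, positivity
of `ψ` on `2 × 2` matrices gives the Kadison–Schwarz type bound
`‖ψ(a)(1 - q)‖² ≤ ‖a‖² ‖(1 - q)ψ(1)(1 - q)‖ ≤ ‖a‖² δ`, so compressing by `q` moves `ψ(a)` by at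
most `2√δ ‖a‖`.
-/

open Filter Topology

/-- Complete positivity for maps between star algebras. -/
def IsCompletelyPositive {B A : Type*}
    [NonUnitalRing B] [StarRing B] [Module ℂ B]
    [NonUnitalRing A] [StarRing A] [PartialOrder A] [Module ℂ A] (φ : B → A) : Prop :=
  (∀ x y, φ (x + y) = φ x + φ y) ∧ (∀ (c : ℂ) (x : B), φ (c • x) = c • φ x) ∧
    ∀ (k : ℕ) (b : Fin k → B) (v : Fin k → A),
      0 ≤ ∑ i, ∑ j, star (v i) * φ (star (b i) * b j) * v j

theorem IsIdempotentElem.isUnit_mul_add_mul_one_sub {A : Type*} [Ring A] {q u v : A}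
    (hq : IsIdempotentElem q) (hu : IsUnit u) (hv : IsUnit v)
    (huq : Commute u q) (hvq : Commute v q) : IsUnit (u * q + v * (1 - q)) := by
  have expand : ∀ u v u' v' : A, Commute u' q → Commute v' q →
      (u * q + v * (1 - q)) * (u' * q + v' * (1 - q)) = u * u' * q + v * v' * (1 - q) := by
    intro u v u' v' hu' hv'
    have hq' : IsIdempotentElem (1 - q) := hq.one_sub
    have h1 : q * (1 - q) = 0 := by rw [mul_sub, mul_one, hq.eq, sub_self]
    have h2 : (1 - q) * q = 0 := by rw [sub_mul, one_mul, hq.eq, sub_self]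
    have hu'' : Commute u' (1 - q) := (Commute.one_right u').sub_right hu'
    have hv'' : Commute v' (1 - q) := (Commute.one_right v').sub_right hv'
    calc (u * q + v * (1 - q)) * (u' * q + v' * (1 - q))
        = u * (q * u') * q + u * (q * v') * (1 - q) + v * ((1 - q) * u') * q
          + v * ((1 - q) * v') * (1 - q) := by noncomm_ring
      _ = u * u' * (q * q) + u * v' * (q * (1 - q)) + v * u' * ((1 - q) * q)
          + v * v' * ((1 - q) * (1 - q)) := by
        rw [← hu'.eq, ← hv'.eq, ← hu''.eq, ← hv''.eq]; noncomm_ring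
      _ = u * u' * q + v * v' * (1 - q) := by rw [hq.eq, hq'.eq, h1, h2]; noncomm_ring
  obtain ⟨U, rfl⟩ := hu
  obtain ⟨V, rfl⟩ := hv
  refine ⟨⟨_, ↑U⁻¹ * q + ↑V⁻¹ * (1 - q), ?_, ?_⟩, rfl⟩
  · rw [expand _ _ _ _ huq.units_inv_left hvq.units_inv_left, U.mul_inv, V.mul_inv]; noncomm_ring
  · rw [expand _ _ _ _ huq hvq, U.inv_mul, V.inv_mul]; noncomm_ring

theorem spectrum_subset_insert_zero_closedBall {𝕜 A : Type*} [NontriviallyNormedField 𝕜]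
    [NormedRing A] [NormedAlgebra 𝕜 A] [NormOneClass A] [CompleteSpace A] {q b : A}
    (hq : IsIdempotentElem q) (hqb : q * b = b) (hbq : b * q = b) :
    spectrum 𝕜 b ⊆ insert 0 (Metric.closedBall 1 ‖b - q‖) := by
  set s := b + (1 - q)
  have hsq : s * q = b := by rw [add_mul, sub_mul, one_mul, hq.eq, hbq, sub_self, add_zero]
  have hqs : q * s = b := by rw [mul_add, mul_sub, mul_one, hq.eq, hqb, sub_self, add_zero]
  intro t ht
  rcases eq_or_ne t 0 with rfl | ht0
  · exact Set.mem_insert _ _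
  refine Set.mem_insert_of_mem _ ?_
  have hts : t ∈ spectrum 𝕜 s := by
    by_contra hts
    rw [spectrum.notMem_iff] at hts
    rw [spectrum.mem_iff] at ht
    apply ht
    have hdecomp : algebraMap 𝕜 A t - b
        = (algebraMap 𝕜 A t - s) * q + algebraMap 𝕜 A t * (1 - q) := by
      rw [sub_mul, hsq, mul_sub, mul_one]; abel
    rw [hdecomp]
    refine hq.isUnit_mul_add_mul_one_sub hts ((isUnit_iff_ne_zero.mpr ht0).map _) ?_
      (Algebra.commutes _ _)
    exact (Algebra.commute_algebraMap_left t q).sub_left (hsq.trans hqs.symm)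
  have h1 : t - 1 ∈ spectrum 𝕜 (s - algebraMap 𝕜 A 1) := by
    rw [← spectrum.sub_singleton_eq]; exact Set.sub_mem_sub hts rfl
  have h2 := spectrum.norm_le_norm_of_mem h1
  rw [map_one, show s - 1 = b - q by simp only [s]; abel] at h2
  rwa [Metric.mem_closedBall, dist_eq_norm]

theorem ContinuousOn.insert_of_isClosed {X Y : Type*} [TopologicalSpace X] [T1Space X]
    [TopologicalSpace Y] {f : X → Y} {K : Set X} (hf : ContinuousOn f K) (hK : IsClosed K)
    (x : X) : ContinuousOn f (insert x K) :=
  Set.insert_eq x K ▸ (continuousOn_singleton f x).union_of_isClosed hf isClosed_singleton hK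

theorem eq_zero_of_mul_mul_eq_self {A : Type*} [NormedRing A] {p x : A} (hp : ‖p‖ ≤ 1)
    (hpxp : p * x * p = p) (hx : ‖x‖ < 1) : p = 0 := by
  have : ‖p‖ ≤ ‖x‖ * ‖p‖ :=
    calc ‖p‖ = ‖p * x * p‖ := by rw [hpxp]
      _ ≤ ‖p‖ * ‖x‖ * ‖p‖ := norm_mul₃_le
      _ ≤ ‖x‖ * ‖p‖ := by gcongr; nlinarith [norm_nonneg x]
  exact norm_eq_zero.mp (by nlinarith [norm_nonneg p])

theorem norm_mul_mul_sub_le {A : Type*} [NormedRing A] {q r x : A} (hqx : q * x = x)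
    (hxq : x * q = x) : ‖r * x * r - x‖ ≤ (‖r‖ + 1) * ‖r - q‖ * ‖x‖ :=
  calc ‖r * x * r - x‖ = ‖r * x * (r - q) + (r - q) * x‖ := by
        rw [mul_sub, sub_mul, mul_assoc r x q, hxq, hqx]; congr 1; abel
    _ ≤ ‖r‖ * ‖x‖ * ‖r - q‖ + ‖r - q‖ * ‖x‖ := by grw [norm_add_le, norm_mul₃_le, norm_mul_le]
    _ = (‖r‖ + 1) * ‖r - q‖ * ‖x‖ := by ring

theorem rpow_neg_half_eq_inv_sqrt {t : ℝ} (ht : 0 ≤ t) : t ^ (-(1:ℝ)/2) = (√t)⁻¹ := by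
  rw [neg_div, Real.rpow_neg ht, Real.sqrt_eq_rpow]

theorem rpow_neg_half_le_two {t : ℝ} (ht : 1 / 4 ≤ t) : t ^ (-(1:ℝ)/2) ≤ 2 := by
  have hsqrt : 1 / 2 ≤ √t := Real.le_sqrt_of_sq_le (by linarith)
  rw [rpow_neg_half_eq_inv_sqrt (by linarith)]
  calc (√t)⁻¹ ≤ (1 / 2)⁻¹ := inv_anti₀ (by norm_num) hsqrt
    _ = 2 := by norm_num

theorem abs_rpow_neg_half_sub_one_le {t : ℝ} (ht : 1 / 4 ≤ t) :
    |t ^ (-(1:ℝ)/2) - 1| ≤ 2 * |t - 1| := by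
  have hsqrt : 1 / 2 ≤ √t := Real.le_sqrt_of_sq_le (by linarith)
  have hsq : √t ^ 2 = t := Real.sq_sqrt (by linarith)
  conv_rhs => rw [← hsq]
  rw [rpow_neg_half_eq_inv_sqrt (by linarith),
    show (√t)⁻¹ - 1 = -(√t - 1) / √t by field_simp; ring,
    show √t ^ 2 - 1 = (√t - 1) * (√t + 1) by ring, abs_div, abs_neg, abs_mul,
    abs_of_pos (by linarith : 0 < √t), abs_of_pos (by linarith : 0 < √t + 1),
    div_le_iff₀ (by linarith)]
  nlinarith [abs_nonneg (√t - 1)]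

theorem ite_zero_rpow_eq_rpow {y : ℝ} (hy : y ≠ 0) :
    (fun t : ℝ => if t = 0 then 0 else t ^ y) = fun t => t ^ y := by
  funext t
  split_ifs with ht
  · rw [ht, Real.zero_rpow hy]
  · rfl

theorem IsSelfAdjoint.mul_eq_self_of_mul_eq_self {A : Type*} [Mul A] [StarMul A] {q b : A}
    (hq : IsSelfAdjoint q) (hb : IsSelfAdjoint b) (hqb : q * b = b) : b * q = b := by
  simpa [hq.star_eq, hb.star_eq] using congrArg star hqb

theorem IsIdempotentElem.mul_compress {A : Type*} [Semigroup A] {q : A}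
    (hq : IsIdempotentElem q) (x : A) : q * (q * x * q) = q * x * q := by
  rw [← mul_assoc, ← mul_assoc, hq.eq]

theorem IsIdempotentElem.compress_mul {A : Type*} [Semigroup A] {q : A}
    (hq : IsIdempotentElem q) (x : A) : q * x * q * q = q * x * q := by
  rw [mul_assoc, hq.eq]

theorem IsStarProjection.norm_mul_mul_le {A : Type*} [NormedRing A] [StarRing A] [CStarRing A]
    {p : A} (hp : IsStarProjection p) (x : A) : ‖p * x * p‖ ≤ ‖x‖ :=
  calc ‖p * x * p‖ ≤ ‖p‖ * ‖x‖ * ‖p‖ := norm_mul₃_le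
    _ ≤ 1 * ‖x‖ * 1 := by gcongr <;> exact hp.norm_le
    _ = ‖x‖ := by ring

theorem IsStarProjection.norm_compress_sub_self_le {A : Type*} [NormedRing A] [StarRing A]
    [CStarRing A] {q : A} (hq : IsStarProjection q) (x : A) : ‖q * x * q - q‖ ≤ ‖x - q‖ := by
  simpa only [mul_sub, sub_mul, hq.isIdempotentElem.eq] using hq.norm_mul_mul_le (x - q)

section Corner

variable {A : Type*} [CStarAlgebra A] {q b : A}

theorem IsStarProjection.spectrum_subset_insert_zero_Icc (hq : IsStarProjection q)
    (hb : IsSelfAdjoint b) (hqb : q * b = b) :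
    spectrum ℝ b ⊆ insert 0 (Set.Icc (1 - ‖b - q‖) (1 + ‖b - q‖)) := by
  rcases subsingleton_or_nontrivial A with hA | hA
  · simp [spectrum.of_subsingleton]
  rw [← Real.closedBall_eq_Icc]
  exact spectrum_subset_insert_zero_closedBall hq.isIdempotentElem hqb
    (hq.isSelfAdjoint.mul_eq_self_of_mul_eq_self hb hqb)

theorem IsStarProjection.continuousOn_spectrum (hq : IsStarProjection q) (hb : IsSelfAdjoint b)
    (hqb : q * b = b) {f : ℝ → ℝ} (hf : ContinuousOn f (Set.Icc (1 - ‖b - q‖) (1 + ‖b - q‖))) :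
    ContinuousOn f (spectrum ℝ b) :=
  (hf.insert_of_isClosed isClosed_Icc 0).mono (hq.spectrum_subset_insert_zero_Icc hb hqb)

theorem IsStarProjection.continuousOn_inv_spectrum (hq : IsStarProjection q)
    (hb : IsSelfAdjoint b) (hqb : q * b = b) (hlt : ‖b - q‖ < 1) :
    ContinuousOn (fun t : ℝ => t⁻¹) (spectrum ℝ b) :=
  hq.continuousOn_spectrum hb hqb <| continuousOn_inv₀.mono fun t ht =>
    (show 0 < t by linarith [ht.1]).ne'

-- As `0⁻¹ = 0`, `t * t⁻¹` is the indicator of `t ≠ 0`: the left side is the support projection.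
theorem IsStarProjection.cfc_mul_inv_self_eq (hq : IsStarProjection q) (hb : IsSelfAdjoint b)
    (hqb : q * b = b) (hlt : ‖b - q‖ < 1) : cfc (fun t : ℝ => t * t⁻¹) b = q := by
  have hinv := hq.continuousOn_inv_spectrum hb hqb hlt
  have hbq := hq.isSelfAdjoint.mul_eq_self_of_mul_eq_self hb hqb
  set e := cfc (fun t : ℝ => t * t⁻¹) b
  have he_eq : e = cfc (fun t : ℝ => t⁻¹) b * b :=
    calc e = cfc (fun t : ℝ => t⁻¹ * t) b := cfc_congr fun t _ => mul_comm _ _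
      _ = cfc (fun t : ℝ => t⁻¹) b * cfc (fun t : ℝ => t) b := cfc_mul _ _ b hinv
      _ = _ := by rw [cfc_id' ℝ b]
  have heb : e * b = b :=
    calc e * b = e * cfc (fun t : ℝ => t) b := by rw [cfc_id' ℝ b]
      _ = cfc (fun t : ℝ => t * t⁻¹ * t) b := (cfc_mul _ _ b (continuousOn_id.mul hinv)).symm
      _ = cfc (fun t : ℝ => t) b := cfc_congr fun t _ => mul_inv_mul_cancel t
      _ = b := cfc_id' ℝ b
  have he : IsStarProjection e := by
    refine ⟨?_, cfc_predicate _ b⟩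
    calc e * e = cfc (fun t : ℝ => t * t⁻¹ * (t * t⁻¹)) b :=
          (cfc_mul _ _ b (continuousOn_id.mul hinv) (continuousOn_id.mul hinv)).symm
      _ = e := cfc_congr fun t _ => by
          rcases eq_or_ne t 0 with rfl | ht
          · simp
          · simp [ht]
  have heq : e * q = e := by rw [he_eq, mul_assoc, hbq]
  -- `q - e` is a projection annihilating `b`, so `‖b - q‖ < 1` forces it to vanish.
  have hp := he.sub_of_mul_eq_left hq heq
  have hpqbp : (q - e) * (q - b) * (q - e) = q - e := by
    have hpq : (q - e) * q = q - e := by rw [sub_mul, hq.isIdempotentElem.eq, heq]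
    have hpb : (q - e) * b = 0 := by rw [sub_mul, hqb, heb, sub_self]
    rw [show (q - e) * (q - b) * (q - e) = (q - e) * q * (q - e) - (q - e) * b * (q - e) by
      noncomm_ring, hpq, hpb, zero_mul, sub_zero, hp.isIdempotentElem.eq]
  have := eq_zero_of_mul_mul_eq_self hp.norm_le hpqbp (by rwa [norm_sub_rev])
  exact (sub_eq_zero.mp this).symm

theorem IsStarProjection.mul_cfc_eq (hq : IsStarProjection q) (hb : IsSelfAdjoint b)
    (hqb : q * b = b) (hlt : ‖b - q‖ < 1) {f : ℝ → ℝ} (hf : ContinuousOn f (spectrum ℝ b))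
    (hf0 : f 0 = 0) : q * cfc f b = cfc f b := by
  have hsupp : ContinuousOn (fun t : ℝ => t * t⁻¹) (spectrum ℝ b) :=
    continuousOn_id.mul (hq.continuousOn_inv_spectrum hb hqb hlt)
  rw [← hq.cfc_mul_inv_self_eq hb hqb hlt, ← cfc_mul (fun t : ℝ => t * t⁻¹) f b hsupp hf]
  refine cfc_congr fun t _ => ?_
  rcases eq_or_ne t 0 with rfl | ht
  · simp [hf0]
  · simp [ht]

theorem IsStarProjection.cfc_mul_eq (hq : IsStarProjection q) (hb : IsSelfAdjoint b)
    (hqb : q * b = b) (hlt : ‖b - q‖ < 1) {f : ℝ → ℝ} (hf : ContinuousOn f (spectrum ℝ b))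
    (hf0 : f 0 = 0) : cfc f b * q = cfc f b := by
  have hcomm : Commute b q :=
    (hq.isSelfAdjoint.mul_eq_self_of_mul_eq_self hb hqb).trans hqb.symm
  rw [(hcomm.cfc_real f).eq, hq.mul_cfc_eq hb hqb hlt hf hf0]

theorem IsStarProjection.exists_inverse_in_corner (hq : IsStarProjection q)
    (hb : IsSelfAdjoint b) (hqb : q * b = b) (hlt : ‖b - q‖ < 1) :
    ∃ y, q * y * q = y ∧ y * b = q ∧ b * y = q := by
  have hinv := hq.continuousOn_inv_spectrum hb hqb hlt
  have hyb : cfc (fun t : ℝ => t⁻¹) b * b = q :=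
    calc cfc (fun t : ℝ => t⁻¹) b * b
          = cfc (fun t : ℝ => t⁻¹) b * cfc (fun t : ℝ => t) b := by rw [cfc_id' ℝ b]
      _ = cfc (fun t : ℝ => t⁻¹ * t) b := (cfc_mul _ _ b hinv).symm
      _ = cfc (fun t : ℝ => t * t⁻¹) b := cfc_congr fun t _ => mul_comm _ _
      _ = q := hq.cfc_mul_inv_self_eq hb hqb hlt
  refine ⟨cfc (fun t : ℝ => t⁻¹) b, ?_, hyb, ?_⟩
  · rw [hq.mul_cfc_eq hb hqb hlt hinv inv_zero, hq.cfc_mul_eq hb hqb hlt hinv inv_zero]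
  · rw [← ((Commute.refl b).cfc_real _).eq, hyb]

theorem IsStarProjection.continuousOn_rpow_neg_half_spectrum (hq : IsStarProjection q)
    (hb : IsSelfAdjoint b) (hqb : q * b = b) (hlt : ‖b - q‖ < 1) :
    ContinuousOn (fun t : ℝ => t ^ (-(1:ℝ)/2)) (spectrum ℝ b) :=
  hq.continuousOn_spectrum hb hqb fun t ht =>
    (Real.continuousAt_rpow_const _ _ (Or.inl (by linarith [ht.1]))).continuousWithinAt

theorem IsStarProjection.cfc_rpow_neg_half_mul_mul_eq (hq : IsStarProjection q)
    (hb : IsSelfAdjoint b) (hqb : q * b = b) (hlt : ‖b - q‖ < 1) :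
    cfc (fun t : ℝ => t ^ (-(1:ℝ)/2)) b * b * cfc (fun t : ℝ => t ^ (-(1:ℝ)/2)) b = q := by
  set f := fun t : ℝ => t ^ (-(1:ℝ)/2)
  have hr : ContinuousOn f (spectrum ℝ b) := hq.continuousOn_rpow_neg_half_spectrum hb hqb hlt
  calc cfc f b * b * cfc f b = cfc f b * cfc (fun t : ℝ => t) b * cfc f b := by
        rw [cfc_id' ℝ b]
    _ = cfc (fun t => f t * t * f t) b := by
        rw [cfc_mul (fun t => f t * t) f b (hr.mul continuousOn_id) hr,
          cfc_mul f (fun t : ℝ => t) b hr continuousOn_id]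
    _ = cfc (fun t : ℝ => t * t⁻¹) b := cfc_congr fun t ht => ?_
    _ = q := hq.cfc_mul_inv_self_eq hb hqb hlt
  rcases hq.spectrum_subset_insert_zero_Icc hb hqb ht with rfl | ht
  · simp
  · have ht0 : 0 < t := by linarith [ht.1]
    rw [mul_comm _ t, mul_assoc, ← Real.rpow_add ht0]
    norm_num [Real.rpow_neg_one]

theorem IsStarProjection.norm_cfc_rpow_neg_half_le (hq : IsStarProjection q)
    (hb : IsSelfAdjoint b) (hqb : q * b = b) (hle : ‖b - q‖ ≤ 3 / 4) :
    ‖cfc (fun t : ℝ => t ^ (-(1:ℝ)/2)) b‖ ≤ 2 := by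
  refine norm_cfc_le zero_le_two fun t ht => ?_
  rcases hq.spectrum_subset_insert_zero_Icc hb hqb ht with rfl | ht
  · norm_num
  · rw [Real.norm_of_nonneg (Real.rpow_nonneg (by linarith [ht.1]) _)]
    exact rpow_neg_half_le_two (by linarith [ht.1])

theorem IsStarProjection.norm_cfc_rpow_neg_half_sub_le (hq : IsStarProjection q)
    (hb : IsSelfAdjoint b) (hqb : q * b = b) (hle : ‖b - q‖ ≤ 3 / 4) :
    ‖cfc (fun t : ℝ => t ^ (-(1:ℝ)/2)) b - q‖ ≤ 2 * ‖b - q‖ := by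
  have hlt : ‖b - q‖ < 1 := by linarith
  have hr := hq.continuousOn_rpow_neg_half_spectrum hb hqb hlt
  have hsupp : ContinuousOn (fun t : ℝ => t * t⁻¹) (spectrum ℝ b) :=
    continuousOn_id.mul (hq.continuousOn_inv_spectrum hb hqb hlt)
  conv_lhs => rw [← hq.cfc_mul_inv_self_eq hb hqb hlt, ← cfc_sub _ _ b hr hsupp]
  refine norm_cfc_le (by positivity) fun t ht => ?_
  rcases hq.spectrum_subset_insert_zero_Icc hb hqb ht with rfl | ht
  · norm_num
  · have ht0 : t ≠ 0 := by linarith [ht.1]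
    rw [mul_inv_cancel₀ ht0, Real.norm_eq_abs]
    calc |t ^ (-(1:ℝ)/2) - 1| ≤ 2 * |t - 1| :=
          abs_rpow_neg_half_sub_one_le (by linarith [ht.1])
      _ ≤ 2 * ‖b - q‖ := by
        gcongr
        exact abs_sub_le_iff.mpr ⟨by linarith [ht.2], by linarith [ht.1]⟩

end Corner

namespace IsCompletelyPositive

open scoped ComplexStarModule

variable {A F : Type*} [CStarAlgebra A] [CStarAlgebra F] [PartialOrder F] {ψ : A → F}

theorem conj (hψ : IsCompletelyPositive ψ) (c : F) :
    IsCompletelyPositive fun a => star c * ψ a * c := by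
  obtain ⟨hadd, hsmul, hpos⟩ := hψ
  refine ⟨fun x y => by simp only [hadd]; noncomm_ring, fun z x => by
    simp only [hsmul, mul_smul_comm, smul_mul_assoc], fun k b v => ?_⟩
  simpa only [star_mul, star_star, mul_assoc] using hpos k b (fun i => c * v i)

theorem conj_compress (hψ : IsCompletelyPositive ψ) {q r : F} (hr : IsSelfAdjoint r)
    (hqr : q * r = r) (hrq : r * q = r) :
    IsCompletelyPositive fun a => r * (q * ψ a * q) * r := by
  have hconj : ∀ a, r * (q * ψ a * q) * r = star r * ψ a * r := fun a =>
    calc r * (q * ψ a * q) * r = (r * q) * ψ a * (q * r) := by noncomm_ring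
      _ = star r * ψ a * r := by rw [hrq, hqr, hr.star_eq]
  simpa only [hconj] using hψ.conj r

theorem map_sub (hψ : IsCompletelyPositive ψ) (x y : A) : ψ (x - y) = ψ x - ψ y :=
  (AddMonoidHom.mk' ψ hψ.1).map_sub x y

theorem map_algebraMap (hψ : IsCompletelyPositive ψ) (t : ℝ) :
    ψ (algebraMap ℝ A t) = t • ψ 1 := by
  rw [Algebra.algebraMap_eq_smul_one, ← algebraMap_smul ℂ t (1 : A), hψ.2.1, algebraMap_smul]

theorem map_star_mul_self_nonneg (hψ : IsCompletelyPositive ψ) (c : A) :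
    0 ≤ ψ (star c * c) := by
  simpa using hψ.2.2 1 (fun _ => c) (fun _ => 1)

theorem map_one_nonneg (hψ : IsCompletelyPositive ψ) : 0 ≤ ψ 1 := by
  simpa using hψ.map_star_mul_self_nonneg 1

theorem map_algebraMap_norm_sub_nonneg (hψ : IsCompletelyPositive ψ) {x : A}
    (hx : IsSelfAdjoint x) : 0 ≤ ψ (algebraMap ℝ A ‖x‖ - x) := by
  let _ := CStarAlgebra.spectralOrder A
  let _ := CStarAlgebra.spectralOrderedRing A
  obtain ⟨c, hc⟩ := CStarAlgebra.nonneg_iff_eq_star_mul_self.mp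
    (sub_nonneg.mpr hx.le_algebraMap_norm_self)
  rw [hc]
  exact hψ.map_star_mul_self_nonneg c

variable [StarOrderedRing F]

theorem isSelfAdjoint_map (hψ : IsCompletelyPositive ψ) {x : A} (hx : IsSelfAdjoint x) :
    IsSelfAdjoint (ψ x) := by
  have hsplit : ψ x = ‖x‖ • ψ 1 - ψ (algebraMap ℝ A ‖x‖ - x) := by
    rw [hψ.map_sub, hψ.map_algebraMap, sub_sub_cancel]
  rw [hsplit]
  exact ((IsSelfAdjoint.all ‖x‖).smul hψ.map_one_nonneg.isSelfAdjoint).sub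
    (hψ.map_algebraMap_norm_sub_nonneg hx).isSelfAdjoint

theorem map_star (hψ : IsCompletelyPositive ψ) (a : A) : ψ (star a) = star (ψ a) := by
  rw [← realPart_add_I_smul_imaginaryPart a]
  simp only [star_add, star_smul, hψ.1, hψ.2.1, (ℜ a).2.star_eq, (ℑ a).2.star_eq,
    (hψ.isSelfAdjoint_map (ℜ a).2).star_eq, (hψ.isSelfAdjoint_map (ℑ a).2).star_eq]

theorem map_star_mul_self_le (hψ : IsCompletelyPositive ψ) (a : A) :
    ψ (star a * a) ≤ (‖a‖ ^ 2) • ψ 1 := by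
  have h := hψ.map_algebraMap_norm_sub_nonneg (IsSelfAdjoint.star_mul_self a)
  rwa [hψ.map_sub, hψ.map_algebraMap, CStarRing.norm_star_mul_self, ← pow_two,
    sub_nonneg] at h

theorem map_one_le_one (hψ : IsCompletelyPositive ψ) (hψc : ∀ x, ‖ψ x‖ ≤ ‖x‖) : ψ 1 ≤ 1 :=
  (CStarAlgebra.norm_le_one_iff_of_nonneg _ hψ.map_one_nonneg).mp
    ((hψc 1).trans (IsStarProjection.one A).norm_le)

theorem star_mul_self_map_mul_le (hψ : IsCompletelyPositive ψ) (hψ1 : ψ 1 ≤ 1) (a : A) (p : F) :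
    star (ψ a * p) * (ψ a * p) ≤ star p * ψ (star a * a) * p := by
  set u := ψ a * p with hu
  have hpos := hψ.2.2 2 ![1, a] ![-u, p]
  simp only [Fin.sum_univ_two, Matrix.cons_val_zero, Matrix.cons_val_one, star_one, one_mul,
    mul_one, star_neg, neg_mul, mul_neg, neg_neg] at hpos
  have hcross : star p * ψ (star a) * u = star u * u := by rw [hψ.map_star, hu, star_mul]
  have hconj : star u * ψ 1 * u ≤ star u * u := by
    simpa using star_left_conjugate_le_conjugate hψ1 u
  have key : star u * u + star u * u ≤ star u * ψ 1 * u + star p * ψ (star a * a) * p := by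
    rw [← sub_nonneg]
    convert hpos using 1
    rw [hcross, hu]
    noncomm_ring
  exact le_of_add_le_add_left (key.trans (add_le_add hconj le_rfl))

theorem norm_map_mul_sq_le (hψ : IsCompletelyPositive ψ) (hψ1 : ψ 1 ≤ 1) (a : A) (p : F) :
    ‖ψ a * p‖ ^ 2 ≤ ‖a‖ ^ 2 * ‖star p * ψ 1 * p‖ := by
  have hle : star (ψ a * p) * (ψ a * p) ≤ (‖a‖ ^ 2) • (star p * ψ 1 * p) :=
    calc _ ≤ star p * ψ (star a * a) * p := hψ.star_mul_self_map_mul_le hψ1 a p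
      _ ≤ star p * ((‖a‖ ^ 2) • ψ 1) * p :=
        star_left_conjugate_le_conjugate (hψ.map_star_mul_self_le a) p
      _ = _ := by rw [mul_smul_comm, smul_mul_assoc]
  have h := CStarAlgebra.norm_le_norm_of_nonneg_of_le (star_mul_self_nonneg _) hle
  rwa [CStarRing.norm_star_mul_self, norm_smul, Real.norm_of_nonneg (by positivity),
    ← pow_two] at h

theorem norm_map_mul_one_sub_le (hψ : IsCompletelyPositive ψ) (hψ1 : ψ 1 ≤ 1) {q : F}
    (hq : IsStarProjection q) (a : A) : ‖ψ a * (1 - q)‖ ≤ √‖ψ 1 - q‖ * ‖a‖ := by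
  have hcompress : ‖star (1 - q) * ψ 1 * (1 - q)‖ ≤ ‖ψ 1 - q‖ := by
    rw [hq.one_sub.isSelfAdjoint.star_eq,
      show (1 - q) * ψ 1 * (1 - q) = (1 - q) * (ψ 1 - q) * (1 - q) by
        rw [mul_sub (1 - q), hq.one_sub_mul_self, sub_zero]]
    exact hq.one_sub.norm_mul_mul_le _
  rw [← pow_le_pow_iff_left₀ (norm_nonneg _) (by positivity) two_ne_zero, mul_pow,
    Real.sq_sqrt (norm_nonneg _), mul_comm]
  exact (hψ.norm_map_mul_sq_le hψ1 a (1 - q)).trans (by gcongr)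

theorem norm_compress_sub_le (hψ : IsCompletelyPositive ψ) (hψ1 : ψ 1 ≤ 1) {q : F}
    (hq : IsStarProjection q) (a : A) : ‖q * ψ a * q - ψ a‖ ≤ 2 * √‖ψ 1 - q‖ * ‖a‖ := by
  have hright := hψ.norm_map_mul_one_sub_le hψ1 hq a
  have hleft : ‖(1 - q) * ψ a‖ ≤ √‖ψ 1 - q‖ * ‖a‖ := by
    rw [← norm_star, star_mul, hq.one_sub.isSelfAdjoint.star_eq, ← hψ.map_star, ← norm_star a]
    exact hψ.norm_map_mul_one_sub_le hψ1 hq (star a)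
  calc ‖q * ψ a * q - ψ a‖ = ‖-(q * (ψ a * (1 - q))) - (1 - q) * ψ a‖ := by
        congr 1; noncomm_ring
    _ ≤ ‖q‖ * ‖ψ a * (1 - q)‖ + ‖(1 - q) * ψ a‖ := by
      grw [norm_sub_le, norm_neg, norm_mul_le]
    _ ≤ 1 * (√‖ψ 1 - q‖ * ‖a‖) + √‖ψ 1 - q‖ * ‖a‖ := by
      gcongr
      exact hq.norm_le
    _ = 2 * √‖ψ 1 - q‖ * ‖a‖ := by ring

theorem norm_conj_compress_sub_le (hψ : IsCompletelyPositive ψ) (hψ1 : ψ 1 ≤ 1)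
    (hψc : ∀ x, ‖ψ x‖ ≤ ‖x‖) {q : F} (hq : IsStarProjection q) (r : F) (a : A) :
    ‖r * (q * ψ a * q) * r - ψ a‖ ≤ ((‖r‖ + 1) * ‖r - q‖ + 2 * √‖ψ 1 - q‖) * ‖a‖ := by
  have hx : ‖q * ψ a * q‖ ≤ ‖a‖ := (hq.norm_mul_mul_le _).trans (hψc a)
  calc ‖r * (q * ψ a * q) * r - ψ a‖
      ≤ ‖r * (q * ψ a * q) * r - q * ψ a * q‖ + ‖q * ψ a * q - ψ a‖ :=
        norm_sub_le_norm_sub_add_norm_sub _ _ _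
    _ ≤ (‖r‖ + 1) * ‖r - q‖ * ‖q * ψ a * q‖ + 2 * √‖ψ 1 - q‖ * ‖a‖ :=
        add_le_add (norm_mul_mul_sub_le (hq.isIdempotentElem.mul_compress _)
          (hq.isIdempotentElem.compress_mul _)) (hψ.norm_compress_sub_le hψ1 hq a)
    _ ≤ (‖r‖ + 1) * ‖r - q‖ * ‖a‖ + 2 * √‖ψ 1 - q‖ * ‖a‖ := by gcongr
    _ = ((‖r‖ + 1) * ‖r - q‖ + 2 * √‖ψ 1 - q‖) * ‖a‖ := by ring

end IsCompletelyPositive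

theorem corner_unitalization.{u, v} :
    ∃ C : ℝ → ℝ, Tendsto C (𝓝[>] (0 : ℝ)) (𝓝 0) ∧
      ∀ (A : Type u) (F : Type v) [CStarAlgebra A]
        [CStarAlgebra F] [FiniteDimensional ℂ F] [PartialOrder F] [StarOrderedRing F]
        (ψ : A → F), IsCompletelyPositive ψ → (∀ x, ‖ψ x‖ ≤ ‖x‖) →
        ∀ q : F, IsIdempotentElem q → IsSelfAdjoint q →
        ∀ δ : ℝ, 0 < δ → δ < 1 / 4 → ‖ψ 1 - q‖ < δ →
          (∃ y : F, q * y * q = y ∧ y * (q * ψ 1 * q) = q ∧ (q * ψ 1 * q) * y = q) ∧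
          (let r : F := cfc (fun t : ℝ => if t = 0 then 0 else t ^ (-(1:ℝ)/2)) (q * ψ 1 * q);
           let ψ' : A → F := fun a => r * (q * ψ a * q) * r;
           ψ' 1 = q ∧ (∀ a, q * ψ' a * q = ψ' a) ∧ IsCompletelyPositive ψ' ∧
             ∀ a : A, ‖ψ' a - ψ a‖ ≤ C δ * ‖a‖) := by
  refine ⟨fun δ => 2 * √δ + 6 * δ, ?_, ?_⟩
  · have hC : Continuous fun δ : ℝ => 2 * √δ + 6 * δ := by fun_prop
    simpa using (hC.tendsto 0).mono_left nhdsWithin_le_nhds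
  intro A F _ _ _ _ _ ψ hψ hψc q hq hqsa δ _ hδ4 hψq
  have hproj : IsStarProjection q := ⟨hq, hqsa⟩
  have hψ1 : ψ 1 ≤ 1 := hψ.map_one_le_one hψc
  set b := q * ψ 1 * q
  have hb : IsSelfAdjoint b := hψ.map_one_nonneg.isSelfAdjoint.conjugate_self hqsa
  have hqb : q * b = b := hq.mul_compress (ψ 1)
  have hbq : ‖b - q‖ < δ := (hproj.norm_compress_sub_self_le (ψ 1)).trans_lt hψq
  have hlt : ‖b - q‖ < 1 := by linarith
  refine ⟨hproj.exists_inverse_in_corner hb hqb hlt, ?_⟩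
  simp only [ite_zero_rpow_eq_rpow (by norm_num : -(1:ℝ)/2 ≠ 0)]
  set r := cfc (fun t : ℝ => t ^ (-(1:ℝ)/2)) b
  have hr := hproj.continuousOn_rpow_neg_half_spectrum hb hqb hlt
  have hqr : q * r = r := hproj.mul_cfc_eq hb hqb hlt hr (by norm_num)
  have hrq : r * q = r := hproj.cfc_mul_eq hb hqb hlt hr (by norm_num)
  refine ⟨hproj.cfc_rpow_neg_half_mul_mul_eq hb hqb hlt, fun a => ?_,
    hψ.conj_compress (cfc_predicate _ b) hqr hrq, fun a => ?_⟩
  · rw [← mul_assoc, ← mul_assoc, hqr, mul_assoc _ r q, hrq]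
  · have hr2 : ‖r‖ ≤ 2 := hproj.norm_cfc_rpow_neg_half_le hb hqb (by linarith)
    have hrq2 : ‖r - q‖ ≤ 2 * ‖b - q‖ :=
      hproj.norm_cfc_rpow_neg_half_sub_le hb hqb (by linarith)
    refine (hψ.norm_conj_compress_sub_le hψ1 hψc hproj r a).trans
      (mul_le_mul_of_nonneg_right ?_ (norm_nonneg a))
    nlinarith [Real.sqrt_le_sqrt hψq.le, norm_nonneg r, norm_nonneg (r - q)]
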